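/- arXiv:0911.2080 — 3 statements merged into one kernel-verified Lean document; each statement's English description precedes it below -/
import Mathlib

section
/- Let M be a connected smooth Banach manifold modeled on a Banach space E with a {1}-structure (η_v)_{v∈E}. If ξ₁ and ξ₂ are infinitesimal automorphisms of (M,η) (smooth vector fields with [ξ₁, η_v] = 0 = [ξ₂, η_v] for all v ∈ E) and ξ₁(x₀) = ξ₂(x₀) for some point x₀ ∈ M, then ξ₁ = ξ₂. In other words, for each x₀ ∈ M, the evaluation map ξ ↦ ξ(x₀) on the space of infinitesimal automorphisms is injective. -/
open Set Bundle
open scoped Manifold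

noncomputable section

/-- The pullback of a vector field under a map between manifolds (modeled on Banach
spaces with trivial models), obtained by applying the inverse of the derivative of the
map to the vector field at the image point.  (This is only meaningful when the
derivative is invertible, e.g. for the maps `extChartAt` used below.) -/
def mpullback {E F : Type*} [NormedAddCommGroup E] [NormedSpace ℝ E]
    [NormedAddCommGroup F] [NormedSpace ℝ F]
    {M N : Type*} [TopologicalSpace M] [ChartedSpace E M]
    [TopologicalSpace N] [ChartedSpace F N]
    (f : M → N) (V : (y : N) → TangentSpace 𝓘(ℝ, F) y) (x : M) :
    TangentSpace 𝓘(ℝ, E) x :=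
  (mfderiv 𝓘(ℝ, E) 𝓘(ℝ, F) f x).inverse (V (f x))

/-- The Lie bracket of two vector fields on a manifold modeled on a Banach space `E`
(with trivial, boundaryless model): push both vector fields forward to the model
space `E` using the preferred chart at `x₀` (equivalently, pull them back by the
inverse chart), take the usual Lie bracket
`[V, W](y) = DW(y)(V y) - DV(y)(W y)` of vector fields on `E`, and pull the result
back to the manifold. -/
def mlieBracket {E : Type*} [NormedAddCommGroup E] [NormedSpace ℝ E]
    {M : Type*} [TopologicalSpace M] [ChartedSpace E M]
    (V W : (x : M) → TangentSpace 𝓘(ℝ, E) x) (x₀ : M) :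
    TangentSpace 𝓘(ℝ, E) x₀ :=
  mpullback (extChartAt 𝓘(ℝ, E) x₀)
    (VectorField.lieBracket ℝ
      (mpullback (extChartAt 𝓘(ℝ, E) x₀).symm V)
      (mpullback (extChartAt 𝓘(ℝ, E) x₀).symm W)) x₀

/-- A `{1}`-structure (absolute parallelism) on a Banach manifold `M` modeled on `E`:
a family `(η_v)_{v ∈ E}` of vector fields such that `(v, x) ↦ η_v x` is smooth,
`v ↦ η_v x` is linear in `v`, and for each `x` the map `v ↦ η_v x` is a topological
linear isomorphism of `E` onto the tangent space at `x`. -/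
structure IsOneStructure {E : Type*} [NormedAddCommGroup E] [NormedSpace ℝ E]
    {M : Type*} [TopologicalSpace M] [ChartedSpace E M]
    [IsManifold 𝓘(ℝ, E) (⊤ : ℕ∞) M]
    (η : E → (x : M) → TangentSpace 𝓘(ℝ, E) x) : Prop where
  smooth : ContMDiff (𝓘(ℝ, E).prod 𝓘(ℝ, E)) 𝓘(ℝ, E).tangent (⊤ : ℕ∞)
    (fun p : E × M => (⟨p.2, η p.1 p.2⟩ : TangentBundle 𝓘(ℝ, E) M))
  linear : ∀ x : M, IsLinearMap ℝ (fun v : E => η v x)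
  isom : ∀ x : M, ∃ e : E ≃L[ℝ] TangentSpace 𝓘(ℝ, E) x, ∀ v : E, e v = η v x

/-- A vector field on a Banach manifold is smooth if it is smooth as a map into the
tangent bundle. -/
def IsSmoothVectorField {E : Type*} [NormedAddCommGroup E] [NormedSpace ℝ E]
    {M : Type*} [TopologicalSpace M] [ChartedSpace E M]
    [IsManifold 𝓘(ℝ, E) (⊤ : ℕ∞) M]
    (ξ : (x : M) → TangentSpace 𝓘(ℝ, E) x) : Prop :=
  ContMDiff 𝓘(ℝ, E) 𝓘(ℝ, E).tangent (⊤ : ℕ∞)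
    (fun x : M => (⟨x, ξ x⟩ : TangentBundle 𝓘(ℝ, E) M))

/-- A vector field `ξ` is an infinitesimal automorphism of the `{1}`-structure `η`
if it is smooth and `[ξ, η_v] = 0` for all `v : E`. -/
def IsInfinitesimalAutomorphism {E : Type*} [NormedAddCommGroup E] [NormedSpace ℝ E]
    {M : Type*} [TopologicalSpace M] [ChartedSpace E M]
    [IsManifold 𝓘(ℝ, E) (⊤ : ℕ∞) M]
    (η : E → (x : M) → TangentSpace 𝓘(ℝ, E) x)
    (ξ : (x : M) → TangentSpace 𝓘(ℝ, E) x) : Prop :=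
  IsSmoothVectorField ξ ∧ ∀ (v : E) (x : M), mlieBracket ξ (η v) x = 0

/-!
In the chart at a point, let `Z` be the difference of the local representatives of `ξ₁` and `ξ₂`
and let `A y : E →L[ℝ] E` be the operator `v ↦ η_v` in the chart. The bracket conditions say
`DZ(y) (A y v) = DA(y) (Z y) v`; as `A y` is invertible this gives `‖DZ(y)‖ ≤ C ‖Z y‖` locally,
so by Grönwall's inequality along segments `Z` vanishes near each of its zeros, while by
continuity it stays nonzero near each non-zero. Hence the truth of `ξ₁ x = ξ₂ x` is locally
constant in `x`, so constant on the connected manifold `M`.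
-/

open Filter Topology
open VectorField (lieBracket)

section Analysis

variable {E F G : Type*} [NormedAddCommGroup E] [NormedSpace ℝ E]
  [NormedAddCommGroup F] [NormedSpace ℝ F] [NormedAddCommGroup G] [NormedSpace ℝ G]

theorem Convex.eqOn_zero_of_norm_fderiv_le {Z : E → G} {s : Set E} {K : ℝ} {y₀ : E}
    (hs : Convex ℝ s) (hZ : ∀ y ∈ s, DifferentiableAt ℝ Z y)
    (hbound : ∀ y ∈ s, ‖fderiv ℝ Z y‖ ≤ K * ‖Z y‖) (hy₀ : y₀ ∈ s) (hZ₀ : Z y₀ = 0) :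
    EqOn Z 0 s := by
  intro y hy
  set σ : ℝ → E := fun t => y₀ + t • (y - y₀)
  have hσ : ∀ t ∈ Icc (0 : ℝ) 1, σ t ∈ s := fun t ht => hs.add_smul_sub_mem hy₀ hy ht
  have hderiv : ∀ t ∈ Icc (0 : ℝ) 1,
      HasDerivAt (Z ∘ σ) (fderiv ℝ Z (σ t) (y - y₀)) t := fun t ht =>
    (hZ _ (hσ t ht)).hasFDerivAt.comp_hasDerivAt t
      (((hasDerivAt_id t).smul_const (y - y₀)).const_add y₀ |>.congr_deriv (one_smul _ _))
  have hbound' : ∀ t ∈ Ico (0 : ℝ) 1,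
      ‖fderiv ℝ Z (σ t) (y - y₀)‖ ≤ K * ‖y - y₀‖ * ‖(Z ∘ σ) t‖ := fun t ht =>
    calc ‖fderiv ℝ Z (σ t) (y - y₀)‖ ≤ ‖fderiv ℝ Z (σ t)‖ * ‖y - y₀‖ :=
          (fderiv ℝ Z (σ t)).le_opNorm _
      _ ≤ K * ‖Z (σ t)‖ * ‖y - y₀‖ := by gcongr; exact hbound _ (hσ t (Ico_subset_Icc_self ht))
      _ = K * ‖y - y₀‖ * ‖(Z ∘ σ) t‖ := by rw [Function.comp_apply]; ring
  have h := eq_zero_of_abs_deriv_le_mul_abs_self_of_eq_zero_right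
    (fun t ht => (hderiv t ht).continuousAt.continuousWithinAt)
    (fun t ht => (hderiv t (Ico_subset_Icc_self ht)).hasDerivWithinAt)
    (by simpa [σ] using hZ₀) hbound' 1 (right_mem_Icc.2 zero_le_one)
  simpa [σ] using h

theorem VectorField.lieBracket_sub_left {V₁ V₂ W : E → E} {y : E}
    (h₁ : DifferentiableAt ℝ V₁ y) (h₂ : DifferentiableAt ℝ V₂ y) :
    lieBracket ℝ (V₁ - V₂) W y = lieBracket ℝ V₁ W y - lieBracket ℝ V₂ W y := by
  simp only [lieBracket_eq, fderiv_sub h₁ h₂, Pi.sub_apply, map_sub, FunLike.coe_sub]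
  abel

theorem fderiv_apply_eq_of_lieBracket_eq_zero {Z : E → E} {A : E → F →L[ℝ] E} {y : E} {v : F}
    (hA : DifferentiableAt ℝ A y) (h : lieBracket ℝ Z (fun y' => A y' v) y = 0) :
    fderiv ℝ Z y (A y v) = fderiv ℝ A y (Z y) v := by
  rw [VectorField.lieBracket_eq, sub_eq_zero,
    fderiv_clm_apply hA (differentiableAt_const v)] at h
  simpa using h.symm

theorem norm_fderiv_le_of_lieBracket_eq_zero {Z : E → E} {A : E → F →L[ℝ] E} {y : E}
    (hA : DifferentiableAt ℝ A y) (hinv : (A y).IsInvertible)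
    (h : ∀ v, lieBracket ℝ Z (fun y' => A y' v) y = 0) :
    ‖fderiv ℝ Z y‖ ≤ ‖fderiv ℝ A y‖ * ‖(A y).inverse‖ * ‖Z y‖ := by
  refine (fderiv ℝ Z y).opNorm_le_bound (by positivity) fun w => ?_
  calc ‖fderiv ℝ Z y w‖ = ‖fderiv ℝ A y (Z y) ((A y).inverse w)‖ := by
        rw [← fderiv_apply_eq_of_lieBracket_eq_zero hA (h _), hinv.self_apply_inverse]
    _ ≤ ‖fderiv ℝ A y (Z y)‖ * ‖(A y).inverse w‖ := ContinuousLinearMap.le_opNorm _ _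
    _ ≤ ‖fderiv ℝ A y‖ * ‖Z y‖ * (‖(A y).inverse‖ * ‖w‖) := by
        gcongr <;> exact ContinuousLinearMap.le_opNorm _ _
    _ = ‖fderiv ℝ A y‖ * ‖(A y).inverse‖ * ‖Z y‖ * ‖w‖ := by ring

theorem HasFDerivAt.apply_eq_of_isLinearMap {f : F → G} {f' : F →L[ℝ] G}
    (hf : IsLinearMap ℝ f) (h : HasFDerivAt f f' 0) (v : F) : f' v = f v := by
  have h₁ : HasDerivAt (fun t : ℝ => f (t • v)) (f' v) 0 := by
    simpa [Function.comp_def] using h.comp_hasDerivAt_of_eq (0 : ℝ)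
      (((hasDerivAt_id (0 : ℝ)).smul_const v).congr_deriv (one_smul ℝ v)) (by simp)
  have h₂ : HasDerivAt (fun t : ℝ => f (t • v)) (f v) 0 := by
    simp_rw [hf.map_smul]
    simpa using (hasDerivAt_id (0 : ℝ)).smul_const (f v)
  exact h₁.unique h₂

def fstDerivAtZero (h : F × E → G) (y : E) : F →L[ℝ] G :=
  (fderiv ℝ h (0, y)).comp (ContinuousLinearMap.inl ℝ F E)

theorem fstDerivAtZero_apply {h : F × E → G} {y : E} (hd : DifferentiableAt ℝ h (0, y))
    (hlin : IsLinearMap ℝ (fun v => h (v, y))) (v : F) : fstDerivAtZero h y v = h (v, y) :=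
  (hd.hasFDerivAt.comp (0 : F) (hasFDerivAt_prodMk_left (0 : F) y)).apply_eq_of_isLinearMap hlin v

theorem ContDiffOn.fstDerivAtZero {n : WithTop ℕ∞} {h : F × E → G} {U : Set E} (hU : IsOpen U)
    (hh : ContDiffOn ℝ (n + 1) h (univ ×ˢ U)) : ContDiffOn ℝ n (fstDerivAtZero h) U :=
  ((ContinuousLinearMap.compL ℝ F (F × E) G).flip
      (ContinuousLinearMap.inl ℝ F E)).contDiff.comp_contDiffOn
    ((hh.fderiv_of_isOpen (isOpen_univ.prod hU) le_rfl).comp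
      (contDiff_const.prodMk contDiff_id).contDiffOn fun _ hy => ⟨trivial, hy⟩)

variable [CompleteSpace F]

theorem eventually_eq_zero_of_lieBracket_eq_zero {Z : E → E} {A : E → F →L[ℝ] E} {U : Set E}
    {y₀ : E} (hU : IsOpen U) (hZ : DifferentiableOn ℝ Z U) (hA : ContDiffOn ℝ 1 A U)
    (hAinv : ∀ y ∈ U, (A y).IsInvertible)
    (hbr : ∀ y ∈ U, ∀ v, lieBracket ℝ Z (fun y' => A y' v) y = 0) (hy₀ : y₀ ∈ U)
    (hZ₀ : Z y₀ = 0) : ∀ᶠ y in 𝓝 y₀, Z y = 0 := by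
  set C : E → ℝ := fun y => ‖fderiv ℝ A y‖ * ‖(A y).inverse‖
  have hC : ContinuousAt C y₀ := by
    obtain ⟨e, he⟩ := hAinv y₀ hy₀
    have hinv : ContinuousAt ContinuousLinearMap.inverse (A y₀) :=
      he ▸ (contDiffAt_map_inverse (n := 0) e).continuousAt
    exact ((hA.continuousOn_fderiv_of_isOpen hU le_rfl).continuousAt (hU.mem_nhds hy₀)).norm.mul
      (hinv.comp (hA.continuousOn.continuousAt (hU.mem_nhds hy₀))).norm
  obtain ⟨r, hr, hball⟩ := Metric.mem_nhds_iff.1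
    (inter_mem (hC.eventually_lt_const (lt_add_one (C y₀))) (hU.mem_nhds hy₀))
  have hbound : ∀ y ∈ Metric.ball y₀ r, ‖fderiv ℝ Z y‖ ≤ (C y₀ + 1) * ‖Z y‖ := by
    intro y hy
    obtain ⟨hCy, hyU⟩ := hball hy
    calc ‖fderiv ℝ Z y‖ ≤ C y * ‖Z y‖ := norm_fderiv_le_of_lieBracket_eq_zero
          ((hA.differentiableOn one_ne_zero).differentiableAt (hU.mem_nhds hyU)) (hAinv y hyU)
          (hbr y hyU)
      _ ≤ (C y₀ + 1) * ‖Z y‖ := by gcongr; exact hCy.le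
  exact mem_of_superset (Metric.ball_mem_nhds y₀ hr) <|
    (convex_ball y₀ r).eqOn_zero_of_norm_fderiv_le
      (fun y hy => hZ.differentiableAt (hU.mem_nhds (hball hy).2)) hbound
      (Metric.mem_ball_self hr) hZ₀

theorem eventually_eq_zero_iff_of_lieBracket_eq_zero {Z : E → E} {A : E → F →L[ℝ] E}
    {U : Set E} {y₀ : E} (hU : IsOpen U) (hZ : DifferentiableOn ℝ Z U) (hA : ContDiffOn ℝ 1 A U)
    (hAinv : ∀ y ∈ U, (A y).IsInvertible)
    (hbr : ∀ y ∈ U, ∀ v, lieBracket ℝ Z (fun y' => A y' v) y = 0) (hy₀ : y₀ ∈ U) :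
    ∀ᶠ y in 𝓝 y₀, (Z y = 0 ↔ Z y₀ = 0) := by
  by_cases hZ₀ : Z y₀ = 0
  · filter_upwards [eventually_eq_zero_of_lieBracket_eq_zero hU hZ hA hAinv hbr hy₀ hZ₀]
      with y hy using by simp [hy, hZ₀]
  · filter_upwards [(hZ.continuousOn.continuousAt (hU.mem_nhds hy₀)).eventually_ne hZ₀]
      with y hy using by simp [hy, hZ₀]

end Analysis

section Manifold

variable {E : Type*} [NormedAddCommGroup E] [NormedSpace ℝ E]
  {M : Type*} [TopologicalSpace M] [ChartedSpace E M]

theorem mlieBracket_eq_vectorField_mlieBracket (V W : (x : M) → TangentSpace 𝓘(ℝ, E) x) :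
    mlieBracket V W = VectorField.mlieBracket 𝓘(ℝ, E) V W := by
  ext x₀
  simp only [VectorField.mlieBracket, VectorField.mlieBracketWithin,
    ModelWithCorners.range_eq_univ, VectorField.mpullbackWithin_univ, preimage_univ, univ_inter]
  erw [VectorField.lieBracketWithin_univ]
  rfl

def chartRep (V : (x : M) → TangentSpace 𝓘(ℝ, E) x) (x : M) : E → E :=
  mpullback (extChartAt 𝓘(ℝ, E) x).symm V

variable [IsManifold 𝓘(ℝ, E) (⊤ : ℕ∞) M]

theorem isInvertible_mfderiv_extChartAt_symm {x : M} {y : E}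
    (hy : y ∈ (extChartAt 𝓘(ℝ, E) x).target) :
    (mfderiv 𝓘(ℝ, E) 𝓘(ℝ, E) (extChartAt 𝓘(ℝ, E) x).symm y).IsInvertible := by
  simpa [mfderivWithin_univ] using isInvertible_mfderivWithin_extChartAt_symm (I := 𝓘(ℝ, E)) hy

theorem chartRep_extChartAt (V : (x : M) → TangentSpace 𝓘(ℝ, E) x) {x z : M}
    (hz : z ∈ (extChartAt 𝓘(ℝ, E) x).source) :
    chartRep V x (extChartAt 𝓘(ℝ, E) x z) =
      mfderiv 𝓘(ℝ, E) 𝓘(ℝ, E) (extChartAt 𝓘(ℝ, E) x) z (V z) := by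
  have h₁ := mfderivWithin_extChartAt_symm_comp_mfderiv_extChartAt' (I := 𝓘(ℝ, E)) hz
  have h₂ := mfderiv_extChartAt_comp_mfderivWithin_extChartAt_symm' (I := 𝓘(ℝ, E)) hz
  rw [ModelWithCorners.range_eq_univ, mfderivWithin_univ] at h₁ h₂
  rw [chartRep, mpullback, (extChartAt 𝓘(ℝ, E) x).left_inv hz,
    ContinuousLinearMap.inverse_eq h₁ h₂]

theorem chartRep_extChartAt_eq_iff {V W : (x : M) → TangentSpace 𝓘(ℝ, E) x} {x z : M}
    (hz : z ∈ (extChartAt 𝓘(ℝ, E) x).source) :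
    chartRep V x (extChartAt 𝓘(ℝ, E) x z) = chartRep W x (extChartAt 𝓘(ℝ, E) x z) ↔
      V z = W z := by
  obtain ⟨e, he⟩ := isInvertible_mfderiv_extChartAt hz
  rw [chartRep_extChartAt V hz, chartRep_extChartAt W hz, ← he]
  exact e.injective.eq_iff

theorem contDiffOn_chartRep_family {F : Type*} [NormedAddCommGroup F] [NormedSpace ℝ F]
    {V : F → (x : M) → TangentSpace 𝓘(ℝ, E) x}
    (hV : ContMDiff (𝓘(ℝ, F).prod 𝓘(ℝ, E)) 𝓘(ℝ, E).tangent (⊤ : ℕ∞)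
      (fun p : F × M => (⟨p.2, V p.1 p.2⟩ : TangentBundle 𝓘(ℝ, E) M))) (x : M) :
    ContDiffOn ℝ (⊤ : ℕ∞) (fun p : F × E => chartRep (V p.1) x p.2)
      (univ ×ˢ (extChartAt 𝓘(ℝ, E) x).target) := by
  have hmaps : MapsTo (fun p : F × M => (⟨p.2, V p.1 p.2⟩ : TangentBundle 𝓘(ℝ, E) M))
      (univ ×ˢ (extChartAt 𝓘(ℝ, E) x).source)
      (trivializationAt E (TangentSpace 𝓘(ℝ, E)) x).source := fun p hp => by
    simpa [extChartAt_source] using hp.2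
  have htriv := ((Trivialization.contMDiffOn_iff hmaps).1 hV.contMDiffOn).2
  have hsymm : ContMDiffOn (𝓘(ℝ, F).prod 𝓘(ℝ, E)) (𝓘(ℝ, F).prod 𝓘(ℝ, E)) (⊤ : ℕ∞)
      (Prod.map id (extChartAt 𝓘(ℝ, E) x).symm) (univ ×ˢ (extChartAt 𝓘(ℝ, E) x).target) :=
    (contMDiffOn_id (M := F)).prodMap (contMDiffOn_extChartAt_symm x)
  have hcomp := htriv.comp hsymm
    (fun p hp => ⟨mem_univ _, (extChartAt 𝓘(ℝ, E) x).map_target hp.2⟩)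
  rw [← modelWithCornersSelf_prod, chartedSpaceSelf_prod] at hcomp
  refine (contMDiffOn_iff_contDiffOn.1 hcomp).congr fun p hp => ?_
  have hz := (extChartAt 𝓘(ℝ, E) x).map_target hp.2
  have hz' : (extChartAt 𝓘(ℝ, E) x).symm p.2 ∈ (chartAt E x).source := by
    rwa [extChartAt_source] at hz
  simp only [Function.comp_apply, Prod.map_fst, Prod.map_snd, id_eq]
  conv_lhs => rw [← (extChartAt 𝓘(ℝ, E) x).right_inv hp.2]
  -- the trivialization at `x` acts on fibres by `tangentCoordChange`, the chart derivative
  rw [chartRep_extChartAt _ hz, (hasMFDerivAt_extChartAt hz').mfderiv,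
    mfderiv_chartAt_eq_tangentCoordChange hz']
  rfl

/-- The frame `v ↦ η v` in the chart at `x`, as an operator-valued map; defined through a
derivative so that its smoothness follows from the joint smoothness of `η`. -/
def chartFrame (η : E → (x : M) → TangentSpace 𝓘(ℝ, E) x) (x : M) : E → E →L[ℝ] E :=
  fstDerivAtZero (fun p : E × E => chartRep (η p.1) x p.2)

namespace IsOneStructure

variable {η : E → (x : M) → TangentSpace 𝓘(ℝ, E) x} (hη : IsOneStructure η)
include hη

theorem isSmoothVectorField (v : E) : IsSmoothVectorField (η v) :=
  hη.smooth.comp (contMDiff_const.prodMk contMDiff_id)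

theorem chartFrame_apply {x : M} {y : E} (hy : y ∈ (extChartAt 𝓘(ℝ, E) x).target) (v : E) :
    chartFrame η x y v = chartRep (η v) x y := by
  refine fstDerivAtZero_apply ?_ ?_ v
  · exact ((contDiffOn_chartRep_family hη.smooth x).differentiableOn (by simp)).differentiableAt
      ((isOpen_univ.prod (isOpen_extChartAt_target x)).mem_nhds ⟨mem_univ _, hy⟩)
  · exact ((mfderiv 𝓘(ℝ, E) 𝓘(ℝ, E) (extChartAt 𝓘(ℝ, E) x).symm y).inverse.toLinearMap.comp
      (IsLinearMap.mk' _ (hη.linear _))).isLinear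

theorem contDiffOn_chartFrame (x : M) :
    ContDiffOn ℝ 1 (chartFrame η x) (extChartAt 𝓘(ℝ, E) x).target :=
  ((contDiffOn_chartRep_family hη.smooth x).of_le (WithTop.coe_le_coe.2 le_top)).fstDerivAtZero
    (isOpen_extChartAt_target x)

theorem isInvertible_chartFrame {x : M} {y : E} (hy : y ∈ (extChartAt 𝓘(ℝ, E) x).target) :
    (chartFrame η x y).IsInvertible := by
  obtain ⟨e, he⟩ := hη.isom ((extChartAt 𝓘(ℝ, E) x).symm y)
  have : chartFrame η x y =
      (mfderiv 𝓘(ℝ, E) 𝓘(ℝ, E) (extChartAt 𝓘(ℝ, E) x).symm y).inverse.comp (e : E →L[ℝ] _) := by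
    refine ContinuousLinearMap.ext fun v => (hη.chartFrame_apply hy v).trans ?_
    rw [chartRep, mpullback, ← he]
    rfl
  rw [this]
  exact (isInvertible_mfderiv_extChartAt_symm hy).inverse.comp
    ContinuousLinearMap.isInvertible_equiv

end IsOneStructure

variable [CompleteSpace E]

theorem IsSmoothVectorField.contDiffAt_chartRep {V : (x : M) → TangentSpace 𝓘(ℝ, E) x}
    (hV : IsSmoothVectorField V) {x : M} {y : E} (hy : y ∈ (extChartAt 𝓘(ℝ, E) x).target) :
    ContDiffAt ℝ (⊤ : ℕ∞) (chartRep V x) y :=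
  contMDiffAt_vectorSpace_iff_contDiffAt.1 <| (hV _).mpullback_vectorField_preimage
    ((contMDiffOn_extChartAt_symm (n := (⊤ : ℕ∞)) x).contMDiffAt
      ((isOpen_extChartAt_target x).mem_nhds hy))
    (isInvertible_mfderiv_extChartAt_symm hy) (by simp)

theorem lieBracket_chartRep_eq_zero {V W : (x : M) → TangentSpace 𝓘(ℝ, E) x}
    (hV : IsSmoothVectorField V) (hW : IsSmoothVectorField W)
    (hVW : ∀ z, mlieBracket V W z = 0) {x : M} {y : E}
    (hy : y ∈ (extChartAt 𝓘(ℝ, E) x).target) :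
    lieBracket ℝ (chartRep V x) (chartRep W x) y = 0 := by
  have : IsManifold 𝓘(ℝ, E) (minSmoothness ℝ 2) M := by
    rw [minSmoothness_of_isRCLikeNormedField]; infer_instance
  have h := VectorField.mpullback_mlieBracket ((hV _).mdifferentiableAt (by simp))
    ((hW _).mdifferentiableAt (by simp))
    ((contMDiffOn_extChartAt_symm (n := (⊤ : ℕ∞)) x).contMDiffAt
      ((isOpen_extChartAt_target x).mem_nhds hy))
    (by rw [minSmoothness_of_isRCLikeNormedField]; exact WithTop.coe_le_coe.2 le_top)
  rw [← mlieBracket_eq_vectorField_mlieBracket, ← VectorField.mlieBracketWithin_univ,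
    VectorField.mlieBracketWithin_eq_lieBracketWithin] at h
  rw [← VectorField.lieBracketWithin_univ]
  exact h.symm.trans (by rw [VectorField.mpullback_apply, hVW, map_zero]; rfl)

theorem IsOneStructure.lieBracket_chartRep_chartFrame_eq_zero
    {η : E → (x : M) → TangentSpace 𝓘(ℝ, E) x} (hη : IsOneStructure η)
    {ξ : (x : M) → TangentSpace 𝓘(ℝ, E) x}
    (hξ : IsInfinitesimalAutomorphism η ξ) {x : M} {y : E}
    (hy : y ∈ (extChartAt 𝓘(ℝ, E) x).target) (v : E) :
    lieBracket ℝ (chartRep ξ x) (fun y' => chartFrame η x y' v) y = 0 := by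
  have hframe : (fun y' => chartFrame η x y' v) =ᶠ[𝓝 y] chartRep (η v) x := by
    filter_upwards [(isOpen_extChartAt_target x).mem_nhds hy] with y' hy'
      using hη.chartFrame_apply hy' v
  rw [Filter.EventuallyEq.rfl.lieBracket_vectorField_eq hframe]
  exact lieBracket_chartRep_eq_zero hξ.1 (hη.isSmoothVectorField v) (hξ.2 v) hy

theorem IsOneStructure.eventually_eq_iff_of_isInfinitesimalAutomorphism
    {η : E → (x : M) → TangentSpace 𝓘(ℝ, E) x} (hη : IsOneStructure η)
    {ξ₁ ξ₂ : (x : M) → TangentSpace 𝓘(ℝ, E) x} (hξ₁ : IsInfinitesimalAutomorphism η ξ₁)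
    (hξ₂ : IsInfinitesimalAutomorphism η ξ₂) (z₀ : M) :
    ∀ᶠ z in 𝓝 z₀, (ξ₁ z = ξ₂ z ↔ ξ₁ z₀ = ξ₂ z₀) := by
  set φ := extChartAt 𝓘(ℝ, E) z₀
  set Z := chartRep ξ₁ z₀ - chartRep ξ₂ z₀
  have hφ : ∀ z ∈ φ.source, (ξ₁ z = ξ₂ z ↔ Z (φ z) = 0) := fun z hz => by
    rw [← chartRep_extChartAt_eq_iff hz, ← sub_eq_zero]
    rfl
  have hdiff : ∀ {ξ : (x : M) → TangentSpace 𝓘(ℝ, E) x}, IsInfinitesimalAutomorphism η ξ →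
      ∀ y ∈ φ.target, DifferentiableAt ℝ (chartRep ξ z₀) y := fun hξ _ hy =>
    (hξ.1.contDiffAt_chartRep hy).differentiableAt (by simp)
  have hZ : ∀ᶠ y in 𝓝 (φ z₀), (Z y = 0 ↔ Z (φ z₀) = 0) :=
    eventually_eq_zero_iff_of_lieBracket_eq_zero (isOpen_extChartAt_target z₀)
      (fun y hy => ((hdiff hξ₁ y hy).sub (hdiff hξ₂ y hy)).differentiableWithinAt)
      (hη.contDiffOn_chartFrame z₀) (fun _ hy => hη.isInvertible_chartFrame hy)
      (fun y hy v => by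
        rw [VectorField.lieBracket_sub_left (hdiff hξ₁ y hy) (hdiff hξ₂ y hy),
          hη.lieBracket_chartRep_chartFrame_eq_zero hξ₁ hy,
          hη.lieBracket_chartRep_chartFrame_eq_zero hξ₂ hy, sub_zero])
      (mem_extChartAt_target z₀)
  filter_upwards [continuousAt_extChartAt z₀ hZ, extChartAt_source_mem_nhds (I := 𝓘(ℝ, E)) z₀]
    with z hz hzφ
  rw [hφ z hzφ, hφ z₀ (mem_extChartAt_source z₀)]
  exact hz

end Manifold

theorem evaluation_injective_on_infinitesimal_automorphisms
    {E : Type*} [NormedAddCommGroup E] [NormedSpace ℝ E] [CompleteSpace E]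
    {M : Type*} [TopologicalSpace M] [ChartedSpace E M]
    [IsManifold 𝓘(ℝ, E) (⊤ : ℕ∞) M] [ConnectedSpace M]
    (η : E → (x : M) → TangentSpace 𝓘(ℝ, E) x) (hη : IsOneStructure η)
    (ξ₁ ξ₂ : (x : M) → TangentSpace 𝓘(ℝ, E) x)
    (hξ₁ : IsInfinitesimalAutomorphism η ξ₁)
    (hξ₂ : IsInfinitesimalAutomorphism η ξ₂)
    (x₀ : M) (h : ξ₁ x₀ = ξ₂ x₀) :
    ξ₁ = ξ₂ := by
  have hlc : IsLocallyConstant fun z => ξ₁ z = ξ₂ z :=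
    (IsLocallyConstant.iff_eventually_eq _).2 fun z₀ =>
      (hη.eventually_eq_iff_of_isInfinitesimalAutomorphism hξ₁ hξ₂ z₀).mono fun _ => propext
  funext z
  exact (hlc.apply_eq_of_preconnectedSpace x₀ z).mp h
end
end

section
/- Let M be a connected smooth Banach manifold modeled on a Banach space E with a {1}-structure (η_v)_{v∈E}. Let A ⊆ M be a nonempty subset that is invariant under integral curves of the vector fields η_v, in the following sense: for every v ∈ E, every curve γ : ℝ → M that is an integral curve of η_v on an interval J ⊆ ℝ, and all s, t ∈ J, if γ(s) ∈ A then γ(t) ∈ A. Then A = M. (Equivalently: any two points of M can be joined by a finite composition of flow maps of the vector fields η_v.) -/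
/-!
In the chart at `x₀` the fields `η v` become vector fields `f v` on the model space that depend
linearly on `v`, and `v ↦ f v c` is an isomorphism at the chart point `c` of `x₀`. For small `v`
let `α v` solve `α' = f v ∘ α` with `α 0 = c`. Grönwall's inequality shows that on a small ball
the time-one map `v ↦ α v 1` differs from that isomorphism by a map with small Lipschitz
constant, so by the approximate inverse function theorem (`ApproximatesLinearOn`) the points
`α v 1` fill a neighbourhood of `c`. Hence every point near `x₀` is joined to `x₀` by an integral
curve of some `η v`, membership in an invariant set is locally constant, and `M` is connected.
-/

open Set Bundle
open scoped Manifold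

noncomputable section

/-- The integral-curve predicate on a manifold (with the meaning it had in Mathlib of
December 2024): `γ` has derivative `v (γ t)` (in the full, not within-`s`, sense) at every
`t ∈ s`. -/
def IsIntegralCurveOnOld {E H : Type*} [NormedAddCommGroup E] [NormedSpace ℝ E]
    [TopologicalSpace H] {I : ModelWithCorners ℝ E H}
    {M : Type*} [TopologicalSpace M] [ChartedSpace H M]
    (γ : ℝ → M) (v : (x : M) → TangentSpace I x) (s : Set ℝ) : Prop :=
  ∀ t ∈ s, HasMFDerivAt 𝓘(ℝ, ℝ) I γ t ((1 : ℝ →L[ℝ] ℝ).smulRight <| v (γ t))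

open Metric Filter
open scoped Topology NNReal

section

variable {E : Type*} [NormedAddCommGroup E] [NormedSpace ℝ E]

theorem IsPicardLindelof.exists_eq_forall_mem_closedBall_hasDerivWithinAt₀ [CompleteSpace E]
    {f : ℝ → E → E} {tmin tmax : ℝ} {t₀ : Icc tmin tmax} {x₀ : E} {a L K : ℝ≥0}
    (hf : IsPicardLindelof f t₀ x₀ a 0 L K) :
    ∃ α : ℝ → E, α t₀ = x₀ ∧ (∀ t, α t ∈ closedBall x₀ a) ∧
      ∀ t ∈ Icc tmin tmax, HasDerivWithinAt α (f t (α t)) (Icc tmin tmax) t := by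
  obtain ⟨α, hα⟩ := ODE.FunSpace.exists_isFixedPt_next hf (mem_closedBall_self le_rfl)
  refine ⟨α.compProj, by rw [ODE.FunSpace.compProj_val, ← hα, ODE.FunSpace.next_apply₀],
    fun t ↦ α.compProj_mem_closedBall hf.mul_max_le, fun t ht ↦ ?_⟩
  apply ODE.hasDerivWithinAt_picard_Icc t₀.2 hf.continuousOn_uncurry
    α.continuous_compProj.continuousOn (fun _ _ ↦ α.compProj_mem_closedBall hf.mul_max_le)
    x₀ ht |>.congr_of_mem _ ht
  intro t' ht'
  nth_rw 1 [← hα]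
  rw [ODE.FunSpace.compProj_of_mem ht', ODE.FunSpace.next_apply]

structure IsUnitTimeSolution (g : E → E) (c : E) (ρ : ℝ) (α : ℝ → E) : Prop where
  apply_zero : α 0 = c
  mem_closedBall : ∀ t ∈ Icc (0 : ℝ) 1, α t ∈ closedBall c ρ
  hasDerivAt : ∀ t ∈ Icc (0 : ℝ) 1, HasDerivAt α (g (α t)) t

namespace IsUnitTimeSolution

variable {g : E → E} {c : E} {ρ : ℝ} {α : ℝ → E}

lemma mono (h : IsUnitTimeSolution g c ρ α) {ρ' : ℝ} (hρ : ρ ≤ ρ') :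
    IsUnitTimeSolution g c ρ' α :=
  { h with mem_closedBall := fun t ht ↦ closedBall_subset_closedBall hρ (h.mem_closedBall t ht) }

lemma continuousOn (h : IsUnitTimeSolution g c ρ α) : ContinuousOn α (Icc 0 1) :=
  fun t ht ↦ (h.hasDerivAt t ht).continuousAt.continuousWithinAt

end IsUnitTimeSolution

/-- Solving on `[-1, 2]` makes the derivative at the endpoints of `[0, 1]` two-sided. -/
theorem exists_isUnitTimeSolution [CompleteSpace E] {g : E → E} {c : E} {ρ L K : ℝ≥0}
    (hg : LipschitzOnWith K g (closedBall c ρ)) (hL : ∀ y ∈ closedBall c ρ, ‖g y‖ ≤ L)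
    (hρ : 2 * L ≤ ρ) : ∃ α, IsUnitTimeSolution g c ρ α := by
  have hpl : IsPicardLindelof (fun _ ↦ g) (⟨0, by norm_num⟩ : Icc (-1 : ℝ) 2) c ρ 0 L K :=
    .of_time_independent hL hg (by norm_num; rw [mul_comm]; exact_mod_cast hρ)
  obtain ⟨α, hα0, hαball, hα⟩ := hpl.exists_eq_forall_mem_closedBall_hasDerivWithinAt₀
  refine ⟨α, hα0, fun t _ ↦ hαball t, fun t ht ↦ ?_⟩
  exact (hα t ⟨by linarith [ht.1], by linarith [ht.2]⟩).hasDerivAt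
    (Icc_mem_nhds (by linarith [ht.1]) (by linarith [ht.2]))

lemma exists_mem_closedBall_eq_smul {r : ℝ} (hr : 0 < r) (v : E) :
    ∃ u ∈ closedBall (0 : E) r, v = (‖v‖ / r) • u := by
  rcases eq_or_ne v 0 with rfl | hv
  · exact ⟨0, mem_closedBall_self hr.le, by simp⟩
  refine ⟨(r / ‖v‖) • v, ?_, ?_⟩
  · rw [mem_closedBall_zero_iff, norm_smul, Real.norm_of_nonneg (by positivity),
      div_mul_cancel₀ _ (norm_ne_zero_iff.2 hv)]
  · rw [smul_smul, div_mul_div_cancel₀ hr.ne', div_self (norm_ne_zero_iff.2 hv), one_smul]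

section LinearFamily

variable {X G : Type*} [PseudoMetricSpace X] [SeminormedAddCommGroup G] [NormedSpace ℝ G]
  (f : E →ₗ[ℝ] X → G) {r : ℝ≥0} {S : Set X} {K : ℝ≥0}

lemma LinearMap.lipschitzOnWith_apply_of_lipschitzOnWith_uncurry (hr : 0 < r)
    (hf : LipschitzOnWith K (fun p : E × X ↦ f p.1 p.2) (closedBall 0 r ×ˢ S)) (v : E) :
    LipschitzOnWith (K / r * ‖v‖₊) (f v) S := by
  obtain ⟨u, hu, hvu⟩ := exists_mem_closedBall_eq_smul (NNReal.coe_pos.2 hr) v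
  have hfv : f v = (‖v‖ / r) • f u := by rw [← map_smul, ← hvu]
  refine LipschitzOnWith.of_dist_le_mul fun y hy y' hy' ↦ ?_
  have h := hf.dist_le_mul (u, y) ⟨hu, hy⟩ (u, y') ⟨hu, hy'⟩
  simp only [Prod.dist_eq, dist_self, max_eq_right dist_nonneg] at h
  rw [hfv, Pi.smul_apply, Pi.smul_apply, dist_smul₀, Real.norm_of_nonneg (by positivity)]
  calc ‖v‖ / r * dist (f u y) (f u y') ≤ ‖v‖ / r * (K * dist y y') := by gcongr
    _ = ↑(K / r * ‖v‖₊) * dist y y' := by push_cast; ring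

lemma LinearMap.norm_apply_le_of_lipschitzOnWith_uncurry (hr : 0 < r)
    (hf : LipschitzOnWith K (fun p : E × X ↦ f p.1 p.2) (closedBall 0 r ×ˢ S)) (v : E)
    {y : X} (hy : y ∈ S) : ‖f v y‖ ≤ K * ‖v‖ := by
  obtain ⟨u, hu, hvu⟩ := exists_mem_closedBall_eq_smul (NNReal.coe_pos.2 hr) v
  have hfv : f v = (‖v‖ / r) • f u := by rw [← map_smul, ← hvu]
  have h := hf.dist_le_mul (u, y) ⟨hu, hy⟩ (0, y) ⟨mem_closedBall_self r.2, hy⟩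
  simp only [Prod.dist_eq, dist_self, dist_zero_right, max_eq_left (norm_nonneg u), map_zero,
    Pi.zero_apply] at h
  rw [hfv, Pi.smul_apply, norm_smul, Real.norm_of_nonneg (by positivity)]
  calc ‖v‖ / r * ‖f u y‖ ≤ ‖v‖ / r * (K * r) := by
        gcongr
        exact h.trans (by gcongr; exact mem_closedBall_zero_iff.1 hu)
    _ = K * ‖v‖ := by field_simp

end LinearFamily

lemma gronwallBound_zero_one_le_two_mul {K ε : ℝ} (hK₀ : 0 ≤ K) (hK₁ : K ≤ 1) (hε : 0 ≤ ε) :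
    gronwallBound 0 K ε 1 ≤ 2 * ε := by
  rcases hK₀.eq_or_lt with rfl | hK
  · simp only [gronwallBound_K0, zero_add, mul_one]
    linarith
  · have hexp := Real.abs_exp_sub_one_le (x := K) (by rwa [abs_of_pos hK])
    rw [abs_of_pos hK] at hexp
    rw [gronwallBound_of_K_ne_0 hK.ne']
    simp only [zero_mul, zero_add, mul_one]
    calc ε / K * (Real.exp K - 1) ≤ ε / K * (2 * K) := by
          gcongr; exact (le_abs_self _).trans hexp
      _ = 2 * ε := by field_simp

section LinearVectorFamily

variable {f : E →ₗ[ℝ] E → E} {c : E} {K B : ℝ≥0}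

lemma norm_apply_sub_apply_sub_apply_le {r : ℝ} (hr : 0 ≤ r)
    (hK : ∀ v, LipschitzOnWith (K * ‖v‖₊) (f v) (closedBall c r)) (v w : E) {y₁ y₂ : E}
    (hy₁ : y₁ ∈ closedBall c r) (hy₂ : y₂ ∈ closedBall c r) :
    ‖f v y₁ - f w y₂ - f (v - w) c‖ ≤ K * ‖v - w‖ * ‖y₁ - c‖ + K * ‖w‖ * ‖y₁ - y₂‖ := by
  calc ‖f v y₁ - f w y₂ - f (v - w) c‖
      = ‖(f (v - w) y₁ - f (v - w) c) + (f w y₁ - f w y₂)‖ := by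
        rw [map_sub, Pi.sub_apply, Pi.sub_apply]; abel_nf
    _ ≤ ↑(K * ‖v - w‖₊) * ‖y₁ - c‖ + ↑(K * ‖w‖₊) * ‖y₁ - y₂‖ :=
        (norm_add_le _ _).trans <| add_le_add
          ((hK _).norm_sub_le hy₁ (mem_closedBall_self hr)) ((hK w).norm_sub_le hy₁ hy₂)
    _ = K * ‖v - w‖ * ‖y₁ - c‖ + K * ‖w‖ * ‖y₁ - y₂‖ := by push_cast; rfl

lemma norm_sub_sub_apply_le_of_isUnitTimeSolution {r : ℝ}
    (hK : ∀ v, LipschitzOnWith (K * ‖v‖₊) (f v) (closedBall c r))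
    (hB : ∀ v, ∀ y ∈ closedBall c r, ‖f v y‖ ≤ B * ‖v‖)
    {s : ℝ} (hsr : 2 * B * s ≤ r) (hsK : K * s ≤ 1) {v w : E} (hv : ‖v‖ ≤ s) (hw : ‖w‖ ≤ s)
    {αv αw : ℝ → E} (hαv : IsUnitTimeSolution (f v) c (2 * B * s) αv)
    (hαw : IsUnitTimeSolution (f w) c (2 * B * s) αw) :
    ‖αv 1 - αw 1 - f (v - w) c‖ ≤ 6 * K * B * s * ‖v - w‖ := by
  have hs : 0 ≤ s := (norm_nonneg v).trans hv
  have hr : 0 ≤ r := le_trans (by positivity) hsr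
  have hball : closedBall c (2 * B * s) ⊆ closedBall c r := closedBall_subset_closedBall hsr
  set ε : ℝ → E := fun t ↦ αv t - αw t - t • f (v - w) c
  have hε : ∀ t ∈ Icc (0 : ℝ) 1,
      HasDerivAt ε (f v (αv t) - f w (αw t) - f (v - w) c) t := fun t ht ↦
    ((hαv.hasDerivAt t ht).sub (hαw.hasDerivAt t ht)).sub (by
      simpa using (hasDerivAt_id t).smul_const (f (v - w) c))
  have hε' : ∀ t ∈ Ico (0 : ℝ) 1, ‖f v (αv t) - f w (αw t) - f (v - w) c‖ ≤
      K * s * ‖ε t‖ + 3 * K * B * s * ‖v - w‖ := by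
    intro t ht
    have ht' := Ico_subset_Icc_self ht
    have hαvt := hαv.mem_closedBall t ht'
    have hδ : ‖αv t - αw t‖ ≤ ‖ε t‖ + B * ‖v - w‖ := by
      calc ‖αv t - αw t‖ = ‖ε t + t • f (v - w) c‖ := by simp [ε]
        _ ≤ ‖ε t‖ + ‖t‖ * ‖f (v - w) c‖ := (norm_add_le _ _).trans_eq (by rw [norm_smul])
        _ ≤ ‖ε t‖ + 1 * (B * ‖v - w‖) := by
          gcongr
          · exact (Real.norm_of_nonneg ht.1).trans_le ht'.2
          · exact hB _ c (mem_closedBall_self hr)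
        _ = ‖ε t‖ + B * ‖v - w‖ := by ring
    calc ‖f v (αv t) - f w (αw t) - f (v - w) c‖
        ≤ K * ‖v - w‖ * ‖αv t - c‖ + K * ‖w‖ * ‖αv t - αw t‖ :=
          norm_apply_sub_apply_sub_apply_le hr hK v w (hball hαvt)
            (hball (hαw.mem_closedBall t ht'))
      _ ≤ K * ‖v - w‖ * (2 * B * s) + K * s * (‖ε t‖ + B * ‖v - w‖) := by
          gcongr
          exact mem_closedBall_iff_norm.1 hαvt
      _ = K * s * ‖ε t‖ + 3 * K * B * s * ‖v - w‖ := by ring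
  have hgron := norm_le_gronwallBound_of_norm_deriv_right_le (f := ε)
    ((hαv.continuousOn.sub hαw.continuousOn).sub
      (continuous_id.smul continuous_const).continuousOn)
    (fun t ht ↦ (hε t (Ico_subset_Icc_self ht)).hasDerivWithinAt)
    (by simp [ε, hαv.apply_zero, hαw.apply_zero] : ‖ε 0‖ ≤ 0) hε' 1 ⟨zero_le_one, le_rfl⟩
  calc ‖αv 1 - αw 1 - f (v - w) c‖ = ‖ε 1‖ := by simp [ε]
    _ ≤ gronwallBound 0 (K * s) (3 * K * B * s * ‖v - w‖) 1 := by
        simpa only [sub_zero] using hgron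
    _ ≤ 2 * (3 * K * B * s * ‖v - w‖) :=
        gronwallBound_zero_one_le_two_mul (by positivity) hsK (by positivity)
    _ = 6 * K * B * s * ‖v - w‖ := by ring


theorem eventually_exists_isUnitTimeSolution_apply_one_eq [CompleteSpace E] {r : ℝ} (hr : 0 < r)
    (hK : ∀ v, LipschitzOnWith (K * ‖v‖₊) (f v) (closedBall c r))
    (hB : ∀ v, ∀ y ∈ closedBall c r, ‖f v y‖ ≤ B * ‖v‖)
    (L : E ≃L[ℝ] E) (hL : ∀ v, L v = f v c) :
    ∀ᶠ y in 𝓝 c, ∃ v α, IsUnitTimeSolution (f v) c r α ∧ α 1 = y := by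
  set N := ‖(L.symm : E →L[ℝ] E)‖₊
  obtain ⟨s, hs, hsr, hsK, hsN⟩ : ∃ s : ℝ≥0, 0 < s ∧ 2 * B * (s : ℝ) ≤ r ∧ K * (s : ℝ) ≤ 1 ∧
      6 * K * B * s * N < 1 := by
    have small (a : ℝ) {b : ℝ} (hb : 0 < b) : ∀ᶠ s : ℝ≥0 in 𝓝 0, a * s < b :=
      ((continuous_const.mul NNReal.continuous_coe).tendsto' 0 0 (by simp)).eventually_lt_const hb
    obtain ⟨s, ⟨h₁, h₂, h₃⟩, hs⟩ := ((small (2 * B) hr).and ((small K one_pos).and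
      (small (6 * K * B * N) one_pos)) |>.filter_mono nhdsWithin_le_nhds |>.and
      (self_mem_nhdsWithin (s := Ioi 0))).exists
    exact ⟨s, hs, h₁.le, h₂.le, by rw [← NNReal.coe_lt_coe]; push_cast; linarith⟩
  have hsol : ∀ v ∈ closedBall (0 : E) s, ∃ α, IsUnitTimeSolution (f v) c (2 * B * ‖v‖₊) α := by
    intro v hv
    have hvr : ((2 * B * ‖v‖₊ : ℝ≥0) : ℝ) ≤ r := by
      push_cast
      exact le_trans (by gcongr; exact mem_closedBall_zero_iff.1 hv) hsr
    exact exists_isUnitTimeSolution (L := B * ‖v‖₊)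
      ((hK v).mono (closedBall_subset_closedBall hvr))
      (fun y hy ↦ by push_cast; exact hB v y (closedBall_subset_closedBall hvr hy))
      (by rw [mul_assoc])
  choose! α hα using hsol
  have hαs : ∀ v ∈ closedBall (0 : E) s, IsUnitTimeSolution (f v) c (2 * B * s) (α v) :=
    fun v hv ↦ (hα v hv).mono (by push_cast; gcongr; exact mem_closedBall_zero_iff.1 hv)
  have hα0 : α 0 1 = c := by
    simpa using (hα 0 (mem_closedBall_self s.2)).mem_closedBall 1 ⟨zero_le_one, le_rfl⟩
  have happrox : ApproximatesLinearOn (fun v ↦ α v 1) (L : E →L[ℝ] E) (closedBall 0 s)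
      (6 * K * B * s) := by
    intro v hv w hw
    rw [ContinuousLinearEquiv.coe_coe, hL]
    push_cast
    exact norm_sub_sub_apply_le_of_isUnitTimeSolution hK hB hsr hsK
      (mem_closedBall_zero_iff.1 hv) (mem_closedBall_zero_iff.1 hw) (hαs v hv) (hαs w hw)
  have hc : Subsingleton E ∨ 6 * K * B * s < L.toNonlinearRightInverse.nnnorm⁻¹ :=
    L.subsingleton_or_nnnorm_symm_pos.imp_right fun hN ↦ (NNReal.lt_inv_iff_mul_lt hN.ne').2 hsN
  have hnhds := happrox.image_mem_nhds _ (closedBall_mem_nhds 0 hs) hc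
  rw [hα0] at hnhds
  filter_upwards [hnhds] with y ⟨v, hv, hvy⟩
  exact ⟨v, α v, (hαs v hv).mono hsr, hvy⟩

end LinearVectorFamily

section OneStructure

variable {M : Type*} [TopologicalSpace M] [ChartedSpace E M] [IsManifold 𝓘(ℝ, E) (⊤ : ℕ∞) M]
  {η : E → (x : M) → TangentSpace 𝓘(ℝ, E) x}

/-- The fields `η v` read in the preferred chart at `x₀`. -/
def IsOneStructure.chartField (hη : IsOneStructure η) (x₀ : M) : E →ₗ[ℝ] E → E where
  toFun v y := tangentCoordChange 𝓘(ℝ, E) ((extChartAt 𝓘(ℝ, E) x₀).symm y) x₀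
    ((extChartAt 𝓘(ℝ, E) x₀).symm y) (η v ((extChartAt 𝓘(ℝ, E) x₀).symm y))
  map_add' v w := by
    ext y
    simp only [Pi.add_apply, (hη.linear _).map_add]
    exact map_add _ _ _
  map_smul' a v := by
    ext y
    simp only [Pi.smul_apply, RingHom.id_apply, (hη.linear _).map_smul]
    exact map_smul _ _ _

lemma IsOneStructure.contDiffAt_chartField (hη : IsOneStructure η) (x₀ : M) :
    ContDiffAt ℝ 1 (fun p : E × E ↦ hη.chartField x₀ p.1 p.2) (0, extChartAt 𝓘(ℝ, E) x₀ x₀) :=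
  ((contMDiffAt_iff.mp (hη.smooth.contMDiffAt (x := ((0 : E), x₀)))).2.contDiffAt
    (by simp)).snd.of_le (by exact_mod_cast le_top)

lemma IsOneStructure.chartField_apply_self (hη : IsOneStructure η) (x₀ : M) (v : E) :
    hη.chartField x₀ v (extChartAt 𝓘(ℝ, E) x₀ x₀) = η v x₀ := by
  change tangentCoordChange 𝓘(ℝ, E) _ x₀ _ (η v _) = _
  generalize hz : (extChartAt 𝓘(ℝ, E) x₀).symm (extChartAt 𝓘(ℝ, E) x₀ x₀) = z
  rw [extChartAt_to_inv] at hz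
  subst hz
  exact tangentCoordChange_self (mem_extChartAt_source x₀)

lemma hasMFDerivAt_extChartAt_symm_comp {F H : Type*} [NormedAddCommGroup F] [NormedSpace ℝ F]
    [TopologicalSpace H] {I : ModelWithCorners ℝ F H}
    {N : Type*} [TopologicalSpace N] [ChartedSpace H N] [IsManifold I 1 N]
    {v : (x : N) → TangentSpace I x} {α : ℝ → F} {t : ℝ} {x₀ : N}
    (hαt : α t ∈ interior (extChartAt I x₀).target)
    (hα : HasDerivAt α (tangentCoordChange I ((extChartAt I x₀).symm (α t)) x₀
      ((extChartAt I x₀).symm (α t)) (v ((extChartAt I x₀).symm (α t)))) t) :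
    HasMFDerivAt 𝓘(ℝ, ℝ) I ((extChartAt I x₀).symm ∘ α) t
      ((1 : ℝ →L[ℝ] ℝ).smulRight (v ((extChartAt I x₀).symm (α t)))) := by
  set xₜ := (extChartAt I x₀).symm (α t)
  have hα' : HasDerivAt α (fderivWithin ℝ (extChartAt I x₀ ∘ (extChartAt I xₜ).symm)
      (range I) (extChartAt I xₜ xₜ) (v xₜ)) t := by
    rwa [← tangentCoordChange_def]
  have hαt' := interior_subset hαt
  have hxₜ : xₜ ∈ (extChartAt I x₀).source := (extChartAt I x₀).map_target hαt'
  have hxₜ' := mem_extChartAt_source (I := I) xₜ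
  refine ⟨(continuousAt_extChartAt_symm'' hαt').comp hα.continuousAt,
    HasDerivWithinAt.hasFDerivWithinAt (𝕜 := ℝ) (F := F) ?_⟩
  simp only [mfld_simps, chartAt_self_eq]
  refine HasDerivAt.hasDerivWithinAt (f := (extChartAt I xₜ ∘ (extChartAt I x₀).symm) ∘ α) ?_
  rw [← tangentCoordChange_self (I := I) (x := xₜ) (z := xₜ) (v := v xₜ) hxₜ']
  erw [← tangentCoordChange_comp (x := x₀) ⟨⟨hxₜ', hxₜ⟩, hxₜ'⟩]
  refine HasFDerivAt.comp_hasDerivAt _ ?_ hα'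
  refine HasFDerivWithinAt.hasFDerivAt (s := range I) ?_ <|
    mem_nhds_iff.mpr ⟨interior (extChartAt I x₀).target,
      interior_subset.trans (extChartAt_target_subset_range ..), isOpen_interior, hαt⟩
  rw [← (extChartAt I x₀).right_inv hαt']
  exact hasFDerivWithinAt_tangentCoordChange ⟨hxₜ, hxₜ'⟩

theorem IsOneStructure.eventually_exists_isIntegralCurveOnOld [CompleteSpace E]
    (hη : IsOneStructure η) (x₀ : M) :
    ∀ᶠ y in 𝓝 x₀, ∃ (v : E) (γ : ℝ → M),
      IsIntegralCurveOnOld γ (η v) (Icc 0 1) ∧ γ 0 = x₀ ∧ γ 1 = y := by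
  set e := extChartAt 𝓘(ℝ, E) x₀
  set f := hη.chartField x₀
  obtain ⟨K, U, hU, hlip⟩ := (hη.contDiffAt_chartField x₀).exists_lipschitzOnWith
  obtain ⟨r, hr, hrU⟩ := nhds_basis_closedBall.mem_iff.1
    (inter_mem hU (prod_mem_nhds univ_mem (extChartAt_target_mem_nhds x₀)))
  lift r to ℝ≥0 using hr.le
  rw [← closedBall_prod_same] at hrU
  have hlip' := hlip.mono (hrU.trans inter_subset_left)
  have htarget : closedBall (e x₀) r ⊆ e.target := fun y hy ↦
    (hrU.trans inter_subset_right (mk_mem_prod (mem_closedBall_self r.2) hy)).2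
  obtain ⟨L, hL⟩ := hη.isom x₀
  have hflow := eventually_exists_isUnitTimeSolution_apply_one_eq hr
    (f.lipschitzOnWith_apply_of_lipschitzOnWith_uncurry hr hlip')
    (fun v y hy ↦ f.norm_apply_le_of_lipschitzOnWith_uncurry hr hlip' v hy)
    (L : E ≃L[ℝ] E) fun v ↦ (hL v).trans (hη.chartField_apply_self x₀ v).symm
  filter_upwards [(continuousAt_extChartAt (I := 𝓘(ℝ, E)) x₀).eventually hflow,
    extChartAt_source_mem_nhds (I := 𝓘(ℝ, E)) x₀]
    with y ⟨v, α, hα, hαy⟩ hy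
  refine ⟨v, e.symm ∘ α, fun t ht ↦ ?_, ?_, ?_⟩
  · have hαt : α t ∈ interior e.target := by
      rw [(isOpen_extChartAt_target x₀).interior_eq]
      exact htarget (hα.mem_closedBall t ht)
    exact hasMFDerivAt_extChartAt_symm_comp hαt (hα.hasDerivAt t ht)
  · simp [hα.apply_zero, e]
  · exact (congrArg e.symm hαy).trans (e.left_inv hy)

end OneStructure

end

theorem flow_invariant_set_eq_univ
    {E : Type*} [NormedAddCommGroup E] [NormedSpace ℝ E] [CompleteSpace E]
    {M : Type*} [TopologicalSpace M] [ChartedSpace E M]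
    [IsManifold 𝓘(ℝ, E) (⊤ : ℕ∞) M] [ConnectedSpace M]
    (η : E → (x : M) → TangentSpace 𝓘(ℝ, E) x) (hη : IsOneStructure η)
    (A : Set M) (hA : A.Nonempty)
    (hinv : ∀ (v : E) (γ : ℝ → M) (J : Set ℝ), J.OrdConnected →
      IsIntegralCurveOnOld γ (η v) J →
        ∀ s ∈ J, ∀ t ∈ J, γ s ∈ A → γ t ∈ A) :
    A = Set.univ := by
  have hloc : IsLocallyConstant (· ∈ A) := by
    refine (IsLocallyConstant.iff_eventually_eq _).2 fun x ↦ ?_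
    filter_upwards [hη.eventually_exists_isIntegralCurveOnOld x] with y ⟨v, γ, hγ, hγ0, hγ1⟩
    have hγA := hinv v γ _ ordConnected_Icc hγ
    have h₀ : (0 : ℝ) ∈ Icc (0 : ℝ) 1 := left_mem_Icc.2 zero_le_one
    have h₁ : (1 : ℝ) ∈ Icc (0 : ℝ) 1 := right_mem_Icc.2 zero_le_one
    rw [← hγ0, ← hγ1]
    exact propext ⟨hγA 1 h₁ 0 h₀, hγA 0 h₀ 1 h₁⟩
  obtain ⟨a, ha⟩ := hA
  exact eq_univ_of_forall fun x ↦ hloc.apply_eq_of_preconnectedSpace a x ▸ ha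
end
end

section
/- Let M and N be C¹ Banach manifolds without boundary, let U be an open neighborhood of a point x in M, and let f : U → N be a C¹ map such that the tangent map T_xf : T_xM → T_{f(x)}N is a closed topological embedding (an injective continuous linear map with closed image that is a homeomorphism onto its image). Then there exists an open neighborhood U′ ⊆ U of x such that the restriction f|_{U′} is a topological embedding. -/
/-!
In charts `f` becomes a `C¹` map `g` between normed spaces whose strict derivative `A` at the
base point is an embedding, hence bounded below: `‖v‖ ≤ K ‖A v‖`. Near the base point `g - A`
is Lipschitz with a constant smaller than `K⁻¹`, so `g` is bi-Lipschitz there and thus an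
embedding. Charts are homeomorphisms onto open sets, so `f` is an embedding on the corresponding
neighborhood.
-/

open scoped Manifold

open scoped NNReal
open Set Topology

section Analysis

variable {𝕜 : Type*} [NontriviallyNormedField 𝕜]
  {E : Type*} [NormedAddCommGroup E] [NormedSpace 𝕜 E]
  {F : Type*} [NormedAddCommGroup F] [NormedSpace 𝕜 F]
  {g : E → F} {A : E →L[𝕜] F}

theorem ApproximatesLinearOn.antilipschitzWith_domRestrict {s : Set E} {c K : ℝ≥0}
    (hg : ApproximatesLinearOn g A s c) (hA : AntilipschitzWith K A) (hc : c < K⁻¹) :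
    AntilipschitzWith (K⁻¹ - c)⁻¹ (s.domRestrict g) :=
  (hA.domRestrict s).add_sub_lipschitzWith hg.lipschitz_sub hc

theorem ApproximatesLinearOn.isEmbedding_domRestrict {s : Set E} {c K : ℝ≥0}
    (hg : ApproximatesLinearOn g A s c) (hA : AntilipschitzWith K A) (hc : c < K⁻¹) :
    IsEmbedding (s.domRestrict g) :=
  ((hg.antilipschitzWith_domRestrict hA hc).isUniformEmbedding
    hg.lipschitz.uniformContinuous).isEmbedding

theorem HasStrictFDerivAt.exists_mem_nhds_isEmbedding_domRestrict {a : E}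
    (hg : HasStrictFDerivAt g A a) (hA : IsEmbedding A) :
    ∃ s ∈ 𝓝 a, IsEmbedding (s.domRestrict g) := by
  obtain ⟨K, hK⟩ := A.antilipschitz_of_isEmbedding hA
  -- `K` may be `0`, and then no approximation constant `c < K⁻¹ = 0` exists
  have hK' : AntilipschitzWith (K + 1) A := fun y z => (hK y z).trans (by gcongr; exact le_self_add)
  have hpos : 0 < (K + 1)⁻¹ := by positivity
  obtain ⟨s, hs, happrox⟩ :=
    hg.approximates_deriv_on_nhds (c := (K + 1)⁻¹ / 2) (Or.inr (half_pos hpos))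
  exact ⟨s, hs, happrox.isEmbedding_domRestrict hK' (half_lt_self hpos)⟩

end Analysis

namespace OpenPartialHomeomorph

variable {X Y Z : Type*} [TopologicalSpace X] [TopologicalSpace Y] [TopologicalSpace Z]

theorem isEmbedding_domRestrict_of_comp (e : OpenPartialHomeomorph Y Z) {f : X → Y} {V : Set X}
    (hV : MapsTo f V e.source) (h : IsEmbedding (V.domRestrict (e ∘ f))) :
    IsEmbedding (V.domRestrict f) := by
  have he : IsEmbedding (e.target.domRestrict e.symm) :=
    e.symm.isOpenEmbedding_restrict.isEmbedding
  have hmaps : ∀ y : V, (e ∘ f) y ∈ e.target := fun y => e.map_source (hV y.2)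
  convert he.comp (h.codRestrict e.target hmaps) using 1
  funext y
  exact (e.left_inv (hV y.2)).symm

theorem isEmbedding_domRestrict_comp (e : OpenPartialHomeomorph X Y) {g : Y → Z} {V : Set X}
    {s : Set Y} (hV : V ⊆ e.source) (hs : MapsTo e V s) (hg : IsEmbedding (s.domRestrict g)) :
    IsEmbedding (V.domRestrict (g ∘ e)) :=
  hg.comp ((e.isOpenEmbedding_restrict.isEmbedding.comp (.inclusion hV)).codRestrict s
    fun y => hs y.2)

end OpenPartialHomeomorph

theorem ContMDiffAt.hasStrictFDerivAt_chart_comp {𝕜 : Type*} [RCLike 𝕜]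
    {E : Type*} [NormedAddCommGroup E] [NormedSpace 𝕜 E]
    {F : Type*} [NormedAddCommGroup F] [NormedSpace 𝕜 F]
    {M : Type*} [TopologicalSpace M] [ChartedSpace E M]
    {N : Type*} [TopologicalSpace N] [ChartedSpace F N] {f : M → N} {x : M}
    (hf : ContMDiffAt 𝓘(𝕜, E) 𝓘(𝕜, F) 1 f x) :
    HasStrictFDerivAt (chartAt F (f x) ∘ f ∘ (chartAt E x).symm)
      (mfderiv 𝓘(𝕜, E) 𝓘(𝕜, F) f x) (chartAt E x x) := by
  have hcd : ContDiffAt 𝕜 1 (chartAt F (f x) ∘ f ∘ (chartAt E x).symm) (chartAt E x x) := by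
    simpa [extChartAt, contDiffWithinAt_univ] using (contMDiffAt_iff.1 hf).2
  have hderiv : fderiv 𝕜 (chartAt F (f x) ∘ f ∘ (chartAt E x).symm) (chartAt E x x) =
      mfderiv 𝓘(𝕜, E) 𝓘(𝕜, F) f x := by
    simp [(hf.mdifferentiableAt one_ne_zero).mfderiv, writtenInExtChartAt, extChartAt]
  exact hderiv ▸ hcd.hasStrictFDerivAt one_ne_zero

theorem locally_embedding_of_mfderiv_isClosedEmbedding_general
    {E : Type*} [NormedAddCommGroup E] [NormedSpace ℝ E]
    {F : Type*} [NormedAddCommGroup F] [NormedSpace ℝ F]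
    {M : Type*} [TopologicalSpace M] [ChartedSpace E M]
    {N : Type*} [TopologicalSpace N] [ChartedSpace F N]
    (f : M → N) (U : Set M) (hU : IsOpen U) (x : M) (hx : x ∈ U)
    (hf : ContMDiffOn 𝓘(ℝ, E) 𝓘(ℝ, F) 1 f U)
    (hder : Topology.IsClosedEmbedding (mfderiv 𝓘(ℝ, E) 𝓘(ℝ, F) f x)) :
    ∃ U' ⊆ U, IsOpen U' ∧ x ∈ U' ∧ Topology.IsEmbedding (U'.restrict f) := by
  let c := chartAt E x
  let d := chartAt F (f x)
  have hstrict := (hf.contMDiffAt (hU.mem_nhds hx)).hasStrictFDerivAt_chart_comp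
  obtain ⟨s, hs, hemb⟩ := hstrict.exists_mem_nhds_isEmbedding_domRestrict hder.isEmbedding
  let V := (U ∩ f ⁻¹' d.source) ∩ (c.source ∩ c ⁻¹' interior s)
  have hV : IsOpen V := (hf.continuousOn.isOpen_inter_preimage hU d.open_source).inter
    (c.isOpen_inter_preimage isOpen_interior)
  have hxV : x ∈ V := ⟨⟨hx, mem_chart_source F (f x)⟩, mem_chart_source E x,
    mem_interior_iff_mem_nhds.2 hs⟩
  refine ⟨V, fun y hy => hy.1.1, hV, hxV,
    d.isEmbedding_domRestrict_of_comp (fun y hy => hy.1.2) ?_⟩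
  have hchart : EqOn (d ∘ f) ((d ∘ f ∘ c.symm) ∘ c) V := fun y hy => by
    simp only [Function.comp_apply, c.left_inv hy.2.1]
  rw [domRestrict_eq_domRestrict_iff.2 hchart]
  exact c.isEmbedding_domRestrict_comp (fun y hy => hy.2.1)
    (fun y hy => interior_subset hy.2.2) hemb

theorem locally_embedding_of_mfderiv_isClosedEmbedding
    {E : Type*} [NormedAddCommGroup E] [NormedSpace ℝ E] [CompleteSpace E]
    {F : Type*} [NormedAddCommGroup F] [NormedSpace ℝ F] [CompleteSpace F]
    {M : Type*} [TopologicalSpace M] [ChartedSpace E M]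
    [HasGroupoid M (contDiffGroupoid 1 𝓘(ℝ, E))]
    {N : Type*} [TopologicalSpace N] [ChartedSpace F N]
    [HasGroupoid N (contDiffGroupoid 1 𝓘(ℝ, F))]
    (f : M → N) (U : Set M) (hU : IsOpen U) (x : M) (hx : x ∈ U)
    (hf : ContMDiffOn 𝓘(ℝ, E) 𝓘(ℝ, F) 1 f U)
    (hder : Topology.IsClosedEmbedding (mfderiv 𝓘(ℝ, E) 𝓘(ℝ, F) f x)) :
    ∃ U' ⊆ U, IsOpen U' ∧ x ∈ U' ∧ Topology.IsEmbedding (U'.restrict f) :=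
  locally_embedding_of_mfderiv_isClosedEmbedding_general f U hU x hx hf hder
end
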